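/- arXiv:math/0609732 — 6 statements merged into one kernel-verified Lean document; each statement's English description precedes it below -/
import Mathlib

section
/- If q is a coisotropic subalgebra of a quadratic Lie algebra (d, ⟨,⟩) and u is a Lagrangian subalgebra (u = u^⊥) with d = u ⊕ u' a direct sum for another Lagrangian subalgebra u', then the subspace q^⊥ + (u ∩ q) is a Lagrangian subspace of d, i.e., (q^⊥ + u ∩ q)^⊥ = q^⊥ + u ∩ q. -/
open LinearMap.BilinForm

lemma orth_sup {K : Type*} [Field K] {d : Type*} [AddCommGroup d] [Module K d]
    (B : LinearMap.BilinForm K d) (A C : Submodule K d) :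
    B.orthogonal (A ⊔ C) = B.orthogonal A ⊓ B.orthogonal C := by
  apply le_antisymm
  · exact le_inf (orthogonal_le le_sup_left) (orthogonal_le le_sup_right)
  · intro x hx n hn
    obtain ⟨a, ha, c, hc, rfl⟩ := Submodule.mem_sup.mp hn
    have h1 := hx.1 a ha
    have h2 := hx.2 c hc
    simp [LinearMap.BilinForm.IsOrtho] at h1 h2 ⊢
    simp [h1, h2]

/-- If `q` is a coisotropic subalgebra of a quadratic Lie algebra and
`d = u ⊕ u'` is a Lagrangian splitting, then `q^⊥ + (u ∩ q)` is a Lagrangian subspace. -/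
theorem perp_add_inter_lagrangian
    {K : Type*} [Field K] {d : Type*} [LieRing d] [LieAlgebra K d]
    [FiniteDimensional K d]
    (B : LinearMap.BilinForm K d)
    (hsymm : ∀ x y : d, B x y = B y x)
    (hinv : ∀ x y z : d, B ⁅x, y⁆ z = B x ⁅y, z⁆)
    (hnd : B.Nondegenerate)
    (q : LieSubalgebra K d)
    (hco : B.orthogonal q.toSubmodule ≤ q.toSubmodule)
    (u u' : LieSubalgebra K d)
    (hu : B.orthogonal u.toSubmodule = u.toSubmodule)
    (hu' : B.orthogonal u'.toSubmodule = u'.toSubmodule)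
    (hsplit : IsCompl u.toSubmodule u'.toSubmodule) :
    B.orthogonal (B.orthogonal q.toSubmodule ⊔ (u.toSubmodule ⊓ q.toSubmodule)) =
      B.orthogonal q.toSubmodule ⊔ (u.toSubmodule ⊓ q.toSubmodule) := by
  have hrefl : B.IsRefl := fun x y h => (hsymm x y) ▸ h
  have horth : ∀ W : Submodule K d, B.orthogonal (B.orthogonal W) = W :=
    fun W => orthogonal_orthogonal hnd hrefl W
  have hinf : B.orthogonal (u.toSubmodule ⊓ q.toSubmodule) =
      u.toSubmodule ⊔ B.orthogonal q.toSubmodule := by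
    rw [← horth (u.toSubmodule ⊔ B.orthogonal q.toSubmodule), orth_sup, hu,
      horth]
  rw [orth_sup, horth, hinf, ← inf_sup_assoc_of_le _ hco, inf_comm, sup_comm]
end

section
/- Let q be a coisotropic subalgebra of a quadratic Lie algebra d such that the normalizer n(q) of q in d equals q. Then q^⊥ ⊆ [q, q]. -/
/-- If `q` is a coisotropic subalgebra of a quadratic Lie algebra whose
normalizer in `d` equals `q`, then `q^⊥ ⊆ [q, q]`. -/
theorem perp_le_commutator_of_self_normalizing
    {K : Type*} [Field K] {d : Type*} [LieRing d] [LieAlgebra K d]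
    [FiniteDimensional K d]
    (B : LinearMap.BilinForm K d)
    (hsymm : ∀ x y : d, B x y = B y x)
    (hinv : ∀ x y z : d, B ⁅x, y⁆ z = B x ⁅y, z⁆)
    (hnd : B.Nondegenerate)
    (q : LieSubalgebra K d)
    (hco : B.orthogonal q.toSubmodule ≤ q.toSubmodule)
    (hnorm : q.normalizer = q) :
    B.orthogonal q.toSubmodule ≤
      Submodule.span K {m : d | ∃ x ∈ q, ∃ y ∈ q, m = ⁅x, y⁆} := by
  have hrefl : B.IsRefl := fun x y h => by rw [hsymm]; exact h
  set W : Submodule K d := Submodule.span K {m : d | ∃ x ∈ q, ∃ y ∈ q, m = ⁅x, y⁆}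
  -- First: B.orthogonal W ≤ q
  have key : B.orthogonal W ≤ q.toSubmodule := by
    intro y hy
    have hy' : ∀ x ∈ q, ⁅y, x⁆ ∈ q := by
      intro x hx
      have hq : ⁅x, y⁆ ∈ B.orthogonal q.toSubmodule := by
        rw [LinearMap.BilinForm.mem_orthogonal_iff]
        intro n hn
        have hgen : (⁅n, x⁆ : d) ∈ W :=
          Submodule.subset_span ⟨n, hn, x, hx, rfl⟩
        have := (LinearMap.BilinForm.mem_orthogonal_iff.mp hy) _ hgen
        -- this : B ⁅n,x⁆ y = 0
        have h2 : B n ⁅x, y⁆ = 0 := by rw [← hinv]; exact this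
        exact h2
      have hxy : (⁅x, y⁆ : d) ∈ q := hco hq
      have : (⁅y, x⁆ : d) = -⁅x, y⁆ := (lie_skew y x).symm
      rw [this]
      exact q.neg_mem hxy
    have : y ∈ q.normalizer := by
      rw [LieSubalgebra.mem_normalizer_iff]
      exact hy'
    rw [hnorm] at this
    exact this
  -- Antitone + double orthogonal
  have h1 : B.orthogonal q.toSubmodule ≤ B.orthogonal (B.orthogonal W) := by
    intro z hz
    rw [LinearMap.BilinForm.mem_orthogonal_iff] at hz ⊢
    intro n hn
    exact hz n (key hn)
  rwa [LinearMap.BilinForm.orthogonal_orthogonal hnd hrefl] at h1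
end

section
/- Let q be a coisotropic subalgebra of a quadratic Lie algebra d such that n(q) = q and [q, q] ⊆ q^⊥. Then [q, q] = q^⊥. -/
/-- If `q` is coisotropic, self-normalizing and `[q,q] ⊆ q^⊥`,
then `[q, q] = q^⊥`. -/
theorem commutator_eq_perp_of_self_normalizing
    {K : Type*} [Field K] {d : Type*} [LieRing d] [LieAlgebra K d]
    [FiniteDimensional K d]
    (B : LinearMap.BilinForm K d)
    (hsymm : ∀ x y : d, B x y = B y x)
    (hinv : ∀ x y z : d, B ⁅x, y⁆ z = B x ⁅y, z⁆)
    (hnd : B.Nondegenerate)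
    (q : LieSubalgebra K d)
    (hco : B.orthogonal q.toSubmodule ≤ q.toSubmodule)
    (hnorm : q.normalizer = q)
    (hqq : Submodule.span K {m : d | ∃ x ∈ q, ∃ y ∈ q, m = ⁅x, y⁆} ≤
      B.orthogonal q.toSubmodule) :
    Submodule.span K {m : d | ∃ x ∈ q, ∃ y ∈ q, m = ⁅x, y⁆} =
      B.orthogonal q.toSubmodule := by
  have hrefl : B.IsRefl := fun x y h => by rw [hsymm]; exact h
  set S : Set d := {m : d | ∃ x ∈ q, ∃ y ∈ q, m = ⁅x, y⁆} with hS
  have key : B.orthogonal (Submodule.span K S) = q.toSubmodule := by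
    ext x
    rw [LinearMap.BilinForm.mem_orthogonal_iff]
    constructor
    · intro hx
      have hxn : x ∈ q.normalizer := by
        rw [LieSubalgebra.mem_normalizer_iff]
        intro y hy
        apply hco
        rw [LinearMap.BilinForm.mem_orthogonal_iff]
        intro m hm
        have hgen : (⁅y, m⁆ : d) ∈ Submodule.span K S :=
          Submodule.subset_span ⟨y, hy, m, hm, rfl⟩
        have := hx _ hgen
        calc B m ⁅x, y⁆ = B ⁅x, y⁆ m := hsymm _ _
          _ = B x ⁅y, m⁆ := hinv _ _ _
          _ = B ⁅y, m⁆ x := hsymm _ _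
          _ = 0 := this
      rwa [hnorm] at hxn
    · intro hx n hn
      have : n ∈ B.orthogonal q.toSubmodule := hqq hn
      rw [LinearMap.BilinForm.mem_orthogonal_iff] at this
      exact hrefl _ _ (this x hx)
  calc Submodule.span K S
      = B.orthogonal (B.orthogonal (Submodule.span K S)) :=
        (LinearMap.BilinForm.orthogonal_orthogonal hnd hrefl _).symm
    _ = B.orthogonal q.toSubmodule := by rw [key]
end

section
/- Let d = u ⊕ u' be a Lagrangian splitting of a quadratic Lie algebra and let q be a coisotropic subalgebra. Then the image of q^⊥ under the projection p_{u'} : d → u' along u equals (u ∩ q)^0 := (u ∩ q)^⊥ ∩ u'. -/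
/-- For a Lagrangian splitting `d = u ⊕ u'` and a coisotropic subalgebra `q`,
the image of `q^⊥` under the projection onto `u'` along `u` equals `(u ∩ q)^⊥ ∩ u'`. -/
theorem proj_perp_eq_zero_annihilator
    {K : Type*} [Field K] {d : Type*} [LieRing d] [LieAlgebra K d]
    [FiniteDimensional K d]
    (B : LinearMap.BilinForm K d)
    (hsymm : ∀ x y : d, B x y = B y x)
    (hinv : ∀ x y z : d, B ⁅x, y⁆ z = B x ⁅y, z⁆)
    (hnd : B.Nondegenerate)
    (u u' : LieSubalgebra K d)
    (hu : B.orthogonal u.toSubmodule = u.toSubmodule)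
    (hu' : B.orthogonal u'.toSubmodule = u'.toSubmodule)
    (hsplit : IsCompl u.toSubmodule u'.toSubmodule)
    (q : LieSubalgebra K d)
    (hco : B.orthogonal q.toSubmodule ≤ q.toSubmodule) :
    Submodule.map
        (u'.toSubmodule.subtype ∘ₗ
          Submodule.linearProjOfIsCompl u'.toSubmodule u.toSubmodule hsplit.symm)
        (B.orthogonal q.toSubmodule) =
      B.orthogonal (u.toSubmodule ⊓ q.toSubmodule) ⊓ u'.toSubmodule := by
  have hrefl : B.IsRefl := fun x y h => by rw [hsymm]; exact h
  set Q := B.orthogonal q.toSubmodule with hQ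
  set π := Submodule.linearProjOfIsCompl u'.toSubmodule u.toSubmodule hsplit.symm with hπ
  -- orthogonal of a sup is the inf of orthogonals
  have horthsup : ∀ S T : Submodule K d,
      B.orthogonal (S ⊔ T) = B.orthogonal S ⊓ B.orthogonal T := by
    intro S T
    ext x
    simp only [Submodule.mem_inf, LinearMap.BilinForm.mem_orthogonal_iff]
    constructor
    · intro h
      exact ⟨fun n hn => h n (Submodule.mem_sup_left hn),
             fun n hn => h n (Submodule.mem_sup_right hn)⟩
    · rintro ⟨h1, h2⟩ n hn
      obtain ⟨y, hy, z, hz, rfl⟩ := Submodule.mem_sup.mp hn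
      have : B (y + z) x = B y x + B z x := by simp
      show B (y + z) x = 0
      rw [this, h1 y hy, h2 z hz, add_zero]
  -- key: orthogonal (u ⊓ q) = u ⊔ Q
  have hkey : B.orthogonal (u.toSubmodule ⊓ q.toSubmodule) = u.toSubmodule ⊔ Q := by
    have h1 : B.orthogonal (u.toSubmodule ⊔ Q) = u.toSubmodule ⊓ q.toSubmodule := by
      rw [horthsup, hu, hQ, LinearMap.BilinForm.orthogonal_orthogonal hnd hrefl]
    rw [← h1, LinearMap.BilinForm.orthogonal_orthogonal hnd hrefl]
  -- the image of Q under the projection is (Q ⊔ u) ⊓ u'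
  have hmap : Submodule.map (u'.toSubmodule.subtype ∘ₗ π) Q
      = (Q ⊔ u.toSubmodule) ⊓ u'.toSubmodule := by
    ext x
    simp only [Submodule.mem_map, Submodule.mem_inf, LinearMap.comp_apply,
      Submodule.coe_subtype]
    constructor
    · rintro ⟨w, hw, rfl⟩
      refine ⟨?_, (π w).2⟩
      have hdecomp := Submodule.projection_add_projection_eq_self hsplit.symm w
      simp only [Submodule.projection_apply] at hdecomp
      refine Submodule.mem_sup.mpr ⟨w, hw,
        -(↑(Submodule.projectionOnto u.toSubmodule u'.toSubmodule hsplit.symm.symm w)),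
        neg_mem (Submodule.projectionOnto u.toSubmodule u'.toSubmodule hsplit.symm.symm w).2,
        ?_⟩
      have h4 := eq_sub_of_add_eq hdecomp
      rw [hπ, Submodule.linearProjOfIsCompl, h4]
      abel
    · rintro ⟨hxQu, hxu'⟩
      obtain ⟨y, hy, z, hz, rfl⟩ := Submodule.mem_sup.mp hxQu
      refine ⟨y, hy, ?_⟩
      have h1 : π (y + z) = ⟨y + z, hxu'⟩ :=
        Submodule.linearProjOfIsCompl_apply_left hsplit.symm ⟨y + z, hxu'⟩
      have h2 : π z = 0 := Submodule.projectionOnto_apply_of_mem_right hsplit.symm hz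
      have h3 : π y = ⟨y + z, hxu'⟩ := by
        rw [← add_zero (π y), ← h2, ← map_add]; exact h1
      rw [h3]
  rw [hmap, hkey, sup_comm]
end

section
/- Let d = u + u' be a Lagrangian splitting of a quadratic Lie algebra and q a coisotropic subalgebra. Let κ_q : d → d/q be the quotient map and its induced map ∧²d → ∧²(d/q). Then κ_q(R_{u,u'}) lies in κ_q(∧²u) ∩ κ_q(∧²u'), where R_{u,u'} = (1/2) Σ ξ_i ∧ x_i is the r-matrix of the splitting. -/
open ExteriorAlgebra

section Aux

variable {K : Type*} [Field K] {V : Type*} [AddCommGroup V] [Module K V]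
  {A : Type*} [Ring A] [Algebra K A]

lemma aux_sum_swap_left (f : V →ₗ[K] A) {n m : ℕ} (a b : Fin n → V) (e : Fin m → V)
    (C : Fin n → Fin m → K) (h : ∀ i, a i = ∑ j, C i j • e j) :
    ∑ i, f (a i) * f (b i) = ∑ j, f (e j) * f (∑ i, C i j • b i) := by
  have h1 : ∀ i, f (a i) * f (b i) = ∑ j, C i j • (f (e j) * f (b i)) := by
    intro i
    rw [h i, map_sum, Finset.sum_mul]
    simp [smul_mul_assoc]
  simp_rw [h1]
  rw [Finset.sum_comm]
  refine Finset.sum_congr rfl fun j _ => ?_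
  rw [map_sum, Finset.mul_sum]
  simp [mul_smul_comm]

lemma aux_sum_swap_right (f : V →ₗ[K] A) {n m : ℕ} (a b : Fin n → V) (e : Fin m → V)
    (C : Fin n → Fin m → K) (h : ∀ i, b i = ∑ j, C i j • e j) :
    ∑ i, f (a i) * f (b i) = ∑ j, f (∑ i, C i j • a i) * f (e j) := by
  have h1 : ∀ i, f (a i) * f (b i) = ∑ j, C i j • (f (a i) * f (e j)) := by
    intro i
    rw [h i, map_sum, Finset.mul_sum]
    simp [mul_smul_comm]
  simp_rw [h1]
  rw [Finset.sum_comm]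
  refine Finset.sum_congr rfl fun j _ => ?_
  rw [map_sum, Finset.sum_mul]
  simp [smul_mul_assoc]

lemma aux_sum_coord_smul (ψ : V →ₗ[K] K) {n m : ℕ} (y w : Fin n → V) (e : Fin m → V)
    (C : Fin n → Fin m → K) (h : ∀ i, ∑ j, C i j • e j = w i) :
    ∑ j, ψ (∑ i, C i j • y i) • e j = ∑ i, ψ (y i) • w i := by
  simp_rw [map_sum, map_smul, smul_eq_mul, Finset.sum_smul]
  rw [Finset.sum_comm]
  refine Finset.sum_congr rfl fun i _ => ?_
  rw [← h i, Finset.smul_sum]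
  refine Finset.sum_congr rfl fun j _ => ?_
  rw [smul_smul, mul_comm]

end Aux

set_option maxHeartbeats 1000000 in
/-- For a Lagrangian splitting `d = u ⊕ u'` and a coisotropic subalgebra `q`,
the image `κ_q(R_{u,u'})` of the `r`-matrix in `∧²(d/q)` lies in
`κ_q(∧²u) ∩ κ_q(∧²u')`. Here the image of `∧²u` under the map induced by the quotient map
`π = κ_q : d → d/q` is the span of the elements `π(a) ∧ π(b)` with `a, b ∈ u`. -/
theorem image_rMatrix_mem_images_of_wedge_squares
    {K : Type*} [Field K] [CharZero K] {d : Type*} [LieRing d] [LieAlgebra K d]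
    [FiniteDimensional K d] (n : ℕ)
    (B : LinearMap.BilinForm K d)
    (hsymm : ∀ x y : d, B x y = B y x)
    (hinv : ∀ x y z : d, B ⁅x, y⁆ z = B x ⁅y, z⁆)
    (hnd : B.Nondegenerate)
    (u u' : LieSubalgebra K d)
    (hu : B.orthogonal u.toSubmodule = u.toSubmodule)
    (hu' : B.orthogonal u'.toSubmodule = u'.toSubmodule)
    (hsplit : IsCompl u.toSubmodule u'.toSubmodule)
    (q : LieSubalgebra K d)
    (hco : B.orthogonal q.toSubmodule ≤ q.toSubmodule)
    (x ξ : Fin n → d)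
    (hx : ∀ i, x i ∈ u) (hξ : ∀ i, ξ i ∈ u')
    (hxspan : Submodule.span K (Set.range x) = u.toSubmodule)
    (hξspan : Submodule.span K (Set.range ξ) = u'.toSubmodule)
    (hdual : ∀ i j, B (x i) (ξ j) = if i = j then 1 else 0) :
    (2 : K)⁻¹ • ∑ i : Fin n,
        ι K (q.toSubmodule.mkQ (ξ i)) * ι K (q.toSubmodule.mkQ (x i)) ∈
      Submodule.span K {z : ExteriorAlgebra K (d ⧸ q.toSubmodule) |
          ∃ a ∈ u, ∃ b ∈ u, z = ι K (q.toSubmodule.mkQ a) * ι K (q.toSubmodule.mkQ b)} ⊓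
      Submodule.span K {z : ExteriorAlgebra K (d ⧸ q.toSubmodule) |
          ∃ a ∈ u', ∃ b ∈ u', z = ι K (q.toSubmodule.mkQ a) * ι K (q.toSubmodule.mkQ b)} := by
  classical
  set π : d →ₗ[K] (d ⧸ q.toSubmodule) := q.toSubmodule.mkQ with hπdef
  -- self-orthogonality of u and u'
  have hBuu : ∀ a b : d, a ∈ u → b ∈ u → B a b = 0 := by
    intro a b ha hb
    have hbₒ : b ∈ B.orthogonal u.toSubmodule := hu.symm ▸ hb
    exact (LinearMap.BilinForm.mem_orthogonal_iff.mp hbₒ) a ha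
  have hBuu' : ∀ a b : d, a ∈ u' → b ∈ u' → B a b = 0 := by
    intro a b ha hb
    have hbₒ : b ∈ B.orthogonal u'.toSubmodule := hu'.symm ▸ hb
    exact (LinearMap.BilinForm.mem_orthogonal_iff.mp hbₒ) a ha
  -- resolution of identity
  set L : d →ₗ[K] d :=
    (∑ i, (B.flip (ξ i)).smulRight (x i)) + (∑ i, (B.flip (x i)).smulRight (ξ i)) with hLdef
  have hLapp : ∀ y : d, L y = (∑ i, B y (ξ i) • x i) + (∑ i, B y (x i) • ξ i) := by
    intro y
    simp [hLdef, LinearMap.sum_apply, LinearMap.smulRight_apply, LinearMap.flip_apply]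
  have hstar : ∀ y : d, (∑ i, B y (ξ i) • x i) + (∑ i, B y (x i) • ξ i) = y := by
    have hsub : u.toSubmodule ⊔ u'.toSubmodule ≤ LinearMap.eqLocus L LinearMap.id := by
      apply sup_le
      · rw [← hxspan, Submodule.span_le]
        rintro _ ⟨j, rfl⟩
        have : L (x j) = x j := by
          rw [hLapp]
          have e1 : (∑ i, B (x j) (ξ i) • x i) = x j := by
            have : ∀ i, B (x j) (ξ i) • x i = if j = i then x j else 0 := by
              intro i
              rw [hdual]
              by_cases h : j = i <;> simp [h]
            simp_rw [this]
            simp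
          have e2 : (∑ i, B (x j) (x i) • ξ i) = 0 := by
            refine Finset.sum_eq_zero fun i _ => ?_
            rw [hBuu _ _ (hx j) (hx i), zero_smul]
          rw [e1, e2, add_zero]
        exact this
      · rw [← hξspan, Submodule.span_le]
        rintro _ ⟨j, rfl⟩
        have : L (ξ j) = ξ j := by
          rw [hLapp]
          have e1 : (∑ i, B (ξ j) (ξ i) • x i) = 0 := by
            refine Finset.sum_eq_zero fun i _ => ?_
            rw [hBuu' _ _ (hξ j) (hξ i), zero_smul]
          have e2 : (∑ i, B (ξ j) (x i) • ξ i) = ξ j := by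
            have : ∀ i, B (ξ j) (x i) • ξ i = if i = j then ξ i else 0 := by
              intro i
              rw [hsymm, hdual]
              by_cases h : i = j <;> simp [h]
            simp_rw [this]
            simp
          rw [e1, e2, zero_add]
        exact this
    intro y
    have hy : y ∈ u.toSubmodule ⊔ u'.toSubmodule := by
      rw [hsplit.codisjoint.eq_top]; trivial
    have := hsub hy
    rw [← hLapp]
    exact this
  -- the image submodules
  set W : Submodule K (d ⧸ q.toSubmodule) := u.toSubmodule.map π with hWdef
  set W' : Submodule K (d ⧸ q.toSubmodule) := u'.toSubmodule.map π with hW'def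
  set U₀ : Submodule K (d ⧸ q.toSubmodule) := W ⊓ W' with hU₀def
  -- functional realized by B against an element of q
  have hfun : ∀ φ : (d ⧸ q.toSubmodule) →ₗ[K] K,
      ∃ z : d, z ∈ q.toSubmodule ∧ ∀ y : d, B z y = φ (π y) := by
    intro φ
    refine ⟨(B.toDual hnd).symm (φ ∘ₗ π), ?_, ?_⟩
    · apply hco
      rw [LinearMap.BilinForm.mem_orthogonal_iff]
      intro m hm
      have hB : ∀ y : d, B ((B.toDual hnd).symm (φ ∘ₗ π)) y = φ (π y) := by
        intro y
        have h1 : B.toDual hnd ((B.toDual hnd).symm (φ ∘ₗ π)) = φ ∘ₗ π :=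
          (B.toDual hnd).apply_symm_apply _
        calc B ((B.toDual hnd).symm (φ ∘ₗ π)) y
            = B.toDual hnd ((B.toDual hnd).symm (φ ∘ₗ π)) y := rfl
          _ = (φ ∘ₗ π) y := by rw [h1]
          _ = φ (π y) := rfl
      show B m ((B.toDual hnd).symm (φ ∘ₗ π)) = 0
      rw [hsymm, hB]
      have : π m = 0 := by
        rw [hπdef, Submodule.mkQ_apply, Submodule.Quotient.mk_eq_zero]
        exact hm
      rw [this, map_zero]
    · intro y
      have h1 : B.toDual hnd ((B.toDual hnd).symm (φ ∘ₗ π)) = φ ∘ₗ π :=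
        (B.toDual hnd).apply_symm_apply _
      calc B ((B.toDual hnd).symm (φ ∘ₗ π)) y
          = B.toDual hnd ((B.toDual hnd).symm (φ ∘ₗ π)) y := rfl
        _ = (φ ∘ₗ π) y := by rw [h1]
        _ = φ (π y) := rfl
  -- claims R and L
  have claimR : ∀ φ : (d ⧸ q.toSubmodule) →ₗ[K] K,
      (∑ i, φ (π (ξ i)) • π (x i)) ∈ U₀ := by
    intro φ
    obtain ⟨z, hzq, hzB⟩ := hfun φ
    have h1 : (∑ i, φ (π (ξ i)) • π (x i)) = π (∑ i, B z (ξ i) • x i) := by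
      rw [map_sum]
      exact Finset.sum_congr rfl fun i _ => by rw [map_smul, hzB]
    have hπz : π z = 0 := by
      rw [hπdef, Submodule.mkQ_apply, Submodule.Quotient.mk_eq_zero]; exact hzq
    have key : π (∑ i, B z (ξ i) • x i) = - π (∑ i, B z (x i) • ξ i) := by
      have h2 := congrArg π (hstar z)
      rw [map_add, hπz] at h2
      exact eq_neg_of_add_eq_zero_left h2
    rw [h1]
    refine Submodule.mem_inf.mpr ⟨?_, ?_⟩
    · exact Submodule.mem_map_of_mem
        (sum_mem fun i _ => Submodule.smul_mem _ _ (hx i))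
    · rw [key]
      exact Submodule.neg_mem _ (Submodule.mem_map_of_mem
        (sum_mem fun i _ => Submodule.smul_mem _ _ (hξ i)))
  have claimL : ∀ φ : (d ⧸ q.toSubmodule) →ₗ[K] K,
      (∑ i, φ (π (x i)) • π (ξ i)) ∈ U₀ := by
    intro φ
    obtain ⟨z, hzq, hzB⟩ := hfun φ
    have h1 : (∑ i, φ (π (x i)) • π (ξ i)) = π (∑ i, B z (x i) • ξ i) := by
      rw [map_sum]
      exact Finset.sum_congr rfl fun i _ => by rw [map_smul, hzB]
    have hπz : π z = 0 := by
      rw [hπdef, Submodule.mkQ_apply, Submodule.Quotient.mk_eq_zero]; exact hzq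
    have key : π (∑ i, B z (x i) • ξ i) = - π (∑ i, B z (ξ i) • x i) := by
      have h2 := congrArg π (hstar z)
      rw [map_add, hπz] at h2
      exact eq_neg_of_add_eq_zero_right h2
    rw [h1]
    refine Submodule.mem_inf.mpr ⟨?_, ?_⟩
    · rw [key]
      exact Submodule.neg_mem _ (Submodule.mem_map_of_mem
        (sum_mem fun i _ => Submodule.smul_mem _ _ (hx i)))
    · exact Submodule.mem_map_of_mem
        (sum_mem fun i _ => Submodule.smul_mem _ _ (hξ i))
  -- projection onto U₀
  obtain ⟨Cc, hCc⟩ := U₀.exists_isCompl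
  set pr : (d ⧸ q.toSubmodule) →ₗ[K] U₀ := Submodule.linearProjOfIsCompl U₀ Cc hCc with hprdef
  set P : (d ⧸ q.toSubmodule) →ₗ[K] (d ⧸ q.toSubmodule) := U₀.subtype ∘ₗ pr with hPdef
  have hPmem : ∀ v, P v ∈ U₀ := fun v => (pr v).2
  have hPfix : ∀ v, v ∈ U₀ → P v = v := by
    intro v hv
    have : pr v = ⟨v, hv⟩ := Submodule.linearProjOfIsCompl_apply_left hCc ⟨v, hv⟩
    simp [hPdef, this]
  -- bases
  let e : Module.Basis (Fin (Module.finrank K (d ⧸ q.toSubmodule))) K (d ⧸ q.toSubmodule) :=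
    Module.finBasis K (d ⧸ q.toSubmodule)
  let c : Module.Basis (Fin (Module.finrank K U₀)) K U₀ := Module.finBasis K U₀
  set Cξ : Fin n → Fin (Module.finrank K (d ⧸ q.toSubmodule)) → K :=
    fun i j => e.repr (π (ξ i)) j with hCξdef
  have hξexp : ∀ i, π (ξ i) = ∑ j, Cξ i j • e j := fun i => (e.sum_repr _).symm
  set s : Fin (Module.finrank K (d ⧸ q.toSubmodule)) → (d ⧸ q.toSubmodule) :=
    fun j => ∑ i, Cξ i j • π (x i) with hsdef
  have hsU₀ : ∀ j, s j ∈ U₀ := by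
    intro j
    have : s j = ∑ i, (e.coord j) (π (ξ i)) • π (x i) := by
      simp [hsdef, hCξdef, Module.Basis.coord_apply]
    rw [this]
    exact claimR (e.coord j)
  -- step 1
  have step1 : (∑ i, ι K (π (ξ i)) * ι K (π (x i))) = ∑ j, ι K (e j) * ι K (s j) :=
    aux_sum_swap_left (ι K) _ _ _ Cξ hξexp
  -- expansion of elements of U₀ along c
  set ψ : Fin (Module.finrank K U₀) → ((d ⧸ q.toSubmodule) →ₗ[K] K) :=
    fun k => (c.coord k) ∘ₗ pr with hψdef
  have hexp : ∀ v, v ∈ U₀ → v = ∑ k, ψ k v • (c k : d ⧸ q.toSubmodule) := by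
    intro v hv
    have h1 : (⟨v, hv⟩ : U₀) = ∑ k, c.repr ⟨v, hv⟩ k • c k := (c.sum_repr _).symm
    have h2 : ∀ k, ψ k v = c.repr ⟨v, hv⟩ k := by
      intro k
      have : pr v = ⟨v, hv⟩ := Submodule.linearProjOfIsCompl_apply_left hCc ⟨v, hv⟩
      simp [hψdef, this, Module.Basis.coord_apply]
    calc v = ((⟨v, hv⟩ : U₀) : d ⧸ q.toSubmodule) := rfl
      _ = ((∑ k, c.repr ⟨v, hv⟩ k • c k : U₀) : d ⧸ q.toSubmodule) := by rw [← h1]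
      _ = ∑ k, c.repr ⟨v, hv⟩ k • (c k : d ⧸ q.toSubmodule) := by
          push_cast [Submodule.coe_sum]
          rfl
      _ = ∑ k, ψ k v • (c k : d ⧸ q.toSubmodule) := by
          exact Finset.sum_congr rfl fun k _ => by rw [h2]
  -- step 2: split off the projection part
  have step2 : (∑ j, ι K (e j) * ι K (s j)) =
      (∑ j, ι K (P (e j)) * ι K (s j)) + (∑ j, ι K (e j - P (e j)) * ι K (s j)) := by
    rw [← Finset.sum_add_distrib]
    refine Finset.sum_congr rfl fun j _ => ?_
    rw [map_sub, sub_mul]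
    abel
  -- step 3: the second piece vanishes
  have step3 : (∑ j, ι K (e j - P (e j)) * ι K (s j)) = 0 := by
    have hswap : (∑ j, ι K (e j - P (e j)) * ι K (s j)) =
        ∑ k, ι K (∑ j, ψ k (s j) • (e j - P (e j))) * ι K ((c k : d ⧸ q.toSubmodule)) :=
      aux_sum_swap_right (ι K) _ _ _ (fun j k => ψ k (s j))
        (fun j => hexp (s j) (hsU₀ j))
    rw [hswap]
    refine Finset.sum_eq_zero fun k _ => ?_
    have hzero : (∑ j, ψ k (s j) • (e j - P (e j))) = 0 := by
      have h1 : (∑ j, ψ k (s j) • (e j - P (e j))) =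
          (∑ j, ψ k (s j) • e j) - P (∑ j, ψ k (s j) • e j) := by
        rw [map_sum]
        rw [← Finset.sum_sub_distrib]
        refine Finset.sum_congr rfl fun j _ => ?_
        rw [smul_sub, map_smul]
      have h2 : (∑ j, ψ k (s j) • e j) = ∑ i, ψ k (π (x i)) • π (ξ i) := by
        have := aux_sum_coord_smul (ψ k) (fun i => π (x i)) (fun i => π (ξ i)) (fun j => e j)
          Cξ (fun i => (hξexp i).symm)
        rw [← this]
      rw [h1, h2, hPfix _ (claimL (ψ k)), sub_self]
    rw [hzero, map_zero, zero_mul]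
  -- final memberships
  have hWle : ∀ v, v ∈ U₀ → ∃ a, a ∈ u ∧ π a = v := by
    intro v hv
    obtain ⟨a, ha, rfl⟩ := (Submodule.mem_map).mp hv.1
    exact ⟨a, ha, rfl⟩
  have hW'le : ∀ v, v ∈ U₀ → ∃ a, a ∈ u' ∧ π a = v := by
    intro v hv
    obtain ⟨a, ha, rfl⟩ := (Submodule.mem_map).mp hv.2
    exact ⟨a, ha, rfl⟩
  have hfinal : (∑ i, ι K (π (ξ i)) * ι K (π (x i))) = ∑ j, ι K (P (e j)) * ι K (s j) := by
    rw [step1, step2, step3, add_zero]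
  rw [hfinal]
  refine Submodule.mem_inf.mpr ⟨?_, ?_⟩
  · refine Submodule.smul_mem _ _ (Submodule.sum_mem _ fun j _ => Submodule.subset_span ?_)
    obtain ⟨a, ha, hav⟩ := hWle _ (hPmem (e j))
    obtain ⟨b, hb, hbv⟩ := hWle _ (hsU₀ j)
    exact ⟨a, ha, b, hb, by rw [hav, hbv]⟩
  · refine Submodule.smul_mem _ _ (Submodule.sum_mem _ fun j _ => Submodule.subset_span ?_)
    obtain ⟨a, ha, hav⟩ := hW'le _ (hPmem (e j))
    obtain ⟨b, hb, hbv⟩ := hW'le _ (hsU₀ j)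
    exact ⟨a, ha, b, hb, by rw [hav, hbv]⟩
end

section
/- Let (S₁,T₁,d₁) and (S₂,T₂,d₂) be generalized Belavin–Drinfeld triples on a finite set Γ (S_i, T_i ⊆ Γ, d_i : S_i → T_i bijections) with S₂^{d₁⁻¹d₂} = ∅, where S₂^{d₁⁻¹d₂} is the set of α ∈ S₂ such that (d₁⁻¹d₂)ⁿα is defined and lies in S₂ for all n ≥ 1. Then for every α ∈ S₁ ∩ S₂ there exist a unique integer n ≥ 1 and unique elements α⁽⁰⁾ = α, α⁽¹⁾, …, α⁽ⁿ⁻¹⁾ ∈ S₁ ∩ S₂ with d₂α⁽ᵏ⁾ = d₁α⁽ᵏ⁺¹⁾ for 0 ≤ k ≤ n−2, and such that either d₂α⁽ⁿ⁻¹⁾ ∉ T₁ or d₂α⁽ⁿ⁻¹⁾ = d₁β for some β ∈ S₁ \ S₂. -/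
/-- Let `(S₁,T₁,d₁)` and `(S₂,T₂,d₂)` be generalized Belavin–Drinfeld triples
on a finite set `Γ` (so `dᵢ` restricts to a bijection `Sᵢ → Tᵢ`) with
`S₂^{d₁⁻¹d₂} = ∅`, i.e. no `α ∈ S₂` admits an infinite forward orbit in `S₂` under the
partial map `d₁⁻¹d₂`.  Then every `α ∈ S₁ ∩ S₂` admits a unique finite chain
`α = α⁽⁰⁾, α⁽¹⁾, …, α⁽ⁿ⁻¹⁾` in `S₁ ∩ S₂` (of a unique length `n ≥ 1`, here encoded as a
function `Fin (m+1) → Γ` with `n = m+1`) with `d₂α⁽ᵏ⁾ = d₁α⁽ᵏ⁺¹⁾` for `0 ≤ k ≤ n-2`, and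
either `d₂α⁽ⁿ⁻¹⁾ ∉ T₁` or `d₂α⁽ⁿ⁻¹⁾ = d₁β` for some `β ∈ S₁ \ S₂`. -/
theorem gBD_chain_exists_unique
    {Γ : Type*} [Finite Γ]
    (S₁ T₁ S₂ T₂ : Set Γ) (d₁ d₂ : Γ → Γ)
    (hd₁ : Set.BijOn d₁ S₁ T₁) (hd₂ : Set.BijOn d₂ S₂ T₂)
    (hempty : ¬ ∃ f : ℕ → Γ, (∀ k, f k ∈ S₂) ∧
      ∀ k, d₂ (f k) ∈ T₁ ∧ d₁ (f (k + 1)) = d₂ (f k)) :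
    ∀ α ∈ S₁ ∩ S₂,
      ∃! p : (m : ℕ) × (Fin (m + 1) → Γ),
        p.2 0 = α ∧
        (∀ k, p.2 k ∈ S₁ ∩ S₂) ∧
        (∀ k : Fin p.1, d₂ (p.2 k.castSucc) = d₁ (p.2 k.succ)) ∧
        (d₂ (p.2 (Fin.last p.1)) ∉ T₁ ∨
          ∃ β ∈ S₁, β ∉ S₂ ∧ d₂ (p.2 (Fin.last p.1)) = d₁ β) := by
  classical
  intro α hα
  haveI : Nonempty Γ := ⟨α⟩
  set inv : Γ → Γ := Function.invFunOn d₁ S₁ with hinvdef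
  have hinv : ∀ a ∈ T₁, inv a ∈ S₁ ∧ d₁ (inv a) = a := by
    intro a ha
    obtain ⟨b, hb, hba⟩ := hd₁.surjOn ha
    exact ⟨Function.invFunOn_mem ⟨b, hb, hba⟩, Function.invFunOn_eq ⟨b, hb, hba⟩⟩
  have hinvuniq : ∀ a ∈ T₁, ∀ b ∈ S₁, d₁ b = a → b = inv a := by
    intro a ha b hb hba
    exact hd₁.injOn hb (hinv a ha).1 (by rw [hba, (hinv a ha).2])
  set C : Γ → Prop := fun a => d₂ a ∈ T₁ ∧ inv (d₂ a) ∈ S₂ with hCdef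
  set step : Γ → Γ := fun a => if C a then inv (d₂ a) else a with hstepdef
  set g : ℕ → Γ := fun k => step^[k] α with hgdef
  have hg0 : g 0 = α := rfl
  have hgsucc : ∀ k, C (g k) → g (k + 1) = inv (d₂ (g k)) := by
    intro k hC
    have : g (k + 1) = step (g k) := Function.iterate_succ_apply' step k α
    rw [this, hstepdef]
    simp only [if_pos hC]
  have hmemg : ∀ k, (∀ j < k, C (g j)) → g k ∈ S₁ ∩ S₂ := by
    intro k
    induction k with
    | zero => intro _; exact hα
    | succ k ih =>
      intro h
      have hC : C (g k) := h k (Nat.lt_succ_self k)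
      have hgk1 := hgsucc k hC
      exact ⟨hgk1 ▸ (hinv _ hC.1).1, hgk1 ▸ hC.2⟩
  have hex : ∃ n, ¬ C (g n) := by
    by_contra h
    push_neg at h
    refine hempty ⟨g, fun k => (hmemg k fun j _ => h j).2, fun k => ⟨(h k).1, ?_⟩⟩
    rw [hgsucc k (h k), (hinv _ (h k).1).2]
  set n := Nat.find hex with hndef
  have hn : ¬ C (g n) := Nat.find_spec hex
  have hltn : ∀ j < n, C (g j) := fun j hj => not_not.mp (Nat.find_min hex hj)
  have hterm_notC : ∀ a, (d₂ a ∉ T₁ ∨ ∃ β ∈ S₁, β ∉ S₂ ∧ d₂ a = d₁ β) → ¬ C a := by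
    rintro a (h | ⟨β, hβ1, hβ2, hβ3⟩) ⟨h1, h2⟩
    · exact h h1
    · have := hinvuniq _ h1 β hβ1 hβ3.symm
      rw [← this] at h2
      exact hβ2 h2
  -- the key rigidity lemma
  have key : ∀ (m : ℕ) (f : Fin (m + 1) → Γ),
      f 0 = α → (∀ k, f k ∈ S₁ ∩ S₂) →
      (∀ k : Fin m, d₂ (f k.castSucc) = d₁ (f k.succ)) →
      (d₂ (f (Fin.last m)) ∉ T₁ ∨ ∃ β ∈ S₁, β ∉ S₂ ∧ d₂ (f (Fin.last m)) = d₁ β) →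
      m = n ∧ ∀ k : Fin (m + 1), f k = g k.val := by
    intro m f hf0 hfmem hfchain hfterm
    have agree : ∀ k, ∀ (hk : k ≤ m), k ≤ n → f ⟨k, Nat.lt_succ_of_le hk⟩ = g k := by
      intro k
      induction k with
      | zero => intro _ _; exact hf0
      | succ k ih =>
        intro hk hkn
        have hk' : k ≤ m := Nat.le_of_succ_le hk
        have hkn' : k ≤ n := Nat.le_of_succ_le hkn
        have hIH := ih hk' hkn'
        have hC : C (g k) := hltn k hkn
        have hchain := hfchain ⟨k, hk⟩
        have hcs : (⟨k, hk⟩ : Fin m).castSucc = ⟨k, Nat.lt_succ_of_le hk'⟩ := rfl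
        have hss : (⟨k, hk⟩ : Fin m).succ = ⟨k + 1, Nat.lt_succ_of_le hk⟩ := rfl
        rw [hcs, hss, hIH] at hchain
        have hmem1 : f ⟨k + 1, Nat.lt_succ_of_le hk⟩ ∈ S₁ := (hfmem _).1
        have := hinvuniq _ hC.1 _ hmem1 hchain.symm
        rw [hgsucc k hC, ← this]
    have hCcont : ∀ k, k < m → k ≤ n → C (g k) := by
      intro k hkm hkn
      have hIH := agree k (le_of_lt hkm) hkn
      have hchain := hfchain ⟨k, hkm⟩
      have hcs : (⟨k, hkm⟩ : Fin m).castSucc = ⟨k, Nat.lt_succ_of_le (le_of_lt hkm)⟩ := rfl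
      rw [hcs, hIH] at hchain
      have hmem1 : f (⟨k, hkm⟩ : Fin m).succ ∈ S₁ := (hfmem _).1
      have hmem2 : f (⟨k, hkm⟩ : Fin m).succ ∈ S₂ := (hfmem _).2
      have hT : d₂ (g k) ∈ T₁ := hchain ▸ hd₁.mapsTo hmem1
      refine ⟨hT, ?_⟩
      have := hinvuniq _ hT _ hmem1 hchain.symm
      rw [← this]
      exact hmem2
    have hmn : m = n := by
      rcases lt_trichotomy m n with h | h | h
      · exfalso
        have hCm : C (g m) := hltn m h
        have : f (Fin.last m) = g m := by
          have : (Fin.last m) = ⟨m, Nat.lt_succ_self m⟩ := rfl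
          rw [this]; exact agree m le_rfl (le_of_lt h)
        exact hterm_notC (g m) (this ▸ hfterm) hCm
      · exact h
      · exfalso
        exact hn (hCcont n h le_rfl)
    refine ⟨hmn, ?_⟩
    intro k
    have hk : (k : ℕ) ≤ m := Nat.lt_succ_iff.mp k.isLt
    have : f ⟨(k : ℕ), Nat.lt_succ_of_le hk⟩ = g k := agree k hk (hmn ▸ hk)
    simpa using this
  -- existence witness
  have hp0mem : ∀ k : Fin (n + 1), g k.val ∈ S₁ ∩ S₂ := by
    intro k
    exact hmemg k.val fun j hj => hltn j (lt_of_lt_of_le hj (Nat.lt_succ_iff.mp k.isLt))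
  refine ⟨⟨n, fun k => g k.val⟩, ⟨hg0, hp0mem, ?_, ?_⟩, ?_⟩
  · intro k
    have hC : C (g k.val) := hltn k.val k.isLt
    show d₂ (g k.val) = d₁ (g (k.val + 1))
    rw [hgsucc k.val hC, (hinv _ hC.1).2]
  · show d₂ (g n) ∉ T₁ ∨ ∃ β ∈ S₁, β ∉ S₂ ∧ d₂ (g n) = d₁ β
    by_cases hT : d₂ (g n) ∈ T₁
    · right
      refine ⟨inv (d₂ (g n)), (hinv _ hT).1, ?_, ((hinv _ hT).2).symm⟩
      intro hS2
      exact hn ⟨hT, hS2⟩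
    · exact Or.inl hT
  · rintro ⟨m, f⟩ ⟨hf0, hfmem, hfchain, hfterm⟩
    obtain ⟨hmn, hfeq⟩ := key m f hf0 hfmem hfchain hfterm
    subst hmn
    have : f = fun k => g k.val := funext hfeq
    rw [this]
end
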